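/- arXiv:1410.7635 — 2 statements merged into one kernel-verified Lean document; each statement's English description precedes it below -/
import Mathlib

section
/- For the Walsh-Paley system, setting q_n = 2^{2n} + 2^{2n−2} + ⋯ + 2^2 + 2^0 = ∑_{l=0}^{n} 4^l, for every x ∈ I_{2s} \ I_{2s+1} with 0 ≤ s ≤ n one has |D_{q_n}(x)| ≥ 2^{2s}/2. -/
open MeasureTheory ENNReal Filter
open scoped Classical

noncomputable section

instance : TopologicalSpace (ZMod 2) := ⊥
instance : DiscreteTopology (ZMod 2) := ⟨rfl⟩
instance : MeasurableSpace (ZMod 2) := ⊤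
instance : BorelSpace (ZMod 2) := ⟨borel_eq_top_of_discrete.symm⟩
instance : IsTopologicalAddGroup (ZMod 2) where
  continuous_add := continuous_of_discreteTopology
  continuous_neg := continuous_of_discreteTopology

/-- The dyadic group `G = (ℤ/2)^ℕ`. -/
abbrev G2 : Type := ℕ → ZMod 2

/-- Normalized Haar (probability) measure on `G2`. -/
def muG : Measure G2 :=
  Measure.addHaarMeasure ⟨⟨Set.univ, isCompact_univ⟩, by
    rw [interior_univ]; exact Set.univ_nonempty⟩

/-- Rademacher functions. -/
def rad (k : ℕ) (x : G2) : ℝ := (-1 : ℝ) ^ ((x k).val)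

/-- Walsh–Paley functions. -/
def walsh (n : ℕ) (x : G2) : ℝ :=
  ∏ k ∈ Finset.range n, if n.testBit k then rad k x else 1

/-- Walsh–Dirichlet kernels. -/
def dirichlet (n : ℕ) (x : G2) : ℝ := ∑ k ∈ Finset.range n, walsh k x

/-- The cylinder sets `I_n`. -/
def cyl (n : ℕ) : Set G2 := {x | ∀ i < n, x i = 0}

/-- Walsh–Fourier coefficients. -/
def fhat (f : G2 → ℝ) (k : ℕ) : ℝ := ∫ x, f x * walsh k x ∂muG

/-- Walsh–Fourier partial sums of a function. -/
def funS (f : G2 → ℝ) (n : ℕ) (x : G2) : ℝ :=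
  ∑ k ∈ Finset.range n, fhat f k * walsh k x

/-- Partial sums of the Walsh series of a dyadic martingale given by coefficients `c`. -/
def mS (c : ℕ → ℝ) (n : ℕ) (x : G2) : ℝ := ∑ k ∈ Finset.range n, c k * walsh k x

/-- The martingale maximal function. -/
def mMax (c : ℕ → ℝ) (x : G2) : ℝ≥0∞ := ⨆ n : ℕ, (‖mS c (2 ^ n) x‖₊ : ℝ≥0∞)

/-- The martingale Hardy space quasi-norm `H_p`. -/
def mHp (p : ℝ) (c : ℕ → ℝ) : ℝ≥0∞ := (∫⁻ x, (mMax c x) ^ p ∂muG) ^ (1 / p)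

/-- The maximal function of an integrable function. -/
def funMax (f : G2 → ℝ) (x : G2) : ℝ≥0∞ := ⨆ n : ℕ, (‖funS f (2 ^ n) x‖₊ : ℝ≥0∞)

/-- The Hardy space quasi-norm of an integrable function. -/
def funHp (p : ℝ) (f : G2 → ℝ) : ℝ≥0∞ := (∫⁻ x, (funMax f x) ^ p ∂muG) ^ (1 / p)

/-- Weak `L^p` quasi-norm. -/
def weakLp (p : ℝ) (f : G2 → ℝ) : ℝ≥0∞ :=
  ⨆ t : NNReal, (t : ℝ≥0∞) * (muG {x | (t : ℝ) < |f x|}) ^ (1 / p)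

/-- `q_n = 1 + 4 + ... + 4^n`. -/
def qq (n : ℕ) : ℕ := ∑ l ∈ Finset.range (n + 1), 4 ^ l

/-!
Write `q_n = 2^{2s+2} A + (2^{2s} + B)` with `B = ∑_{l<s} 4^l ≤ 2^{2s}/2`. Since
`w_{2^m a + b} = w_{2^m a} w_b` for `b < 2^m`, we have `D_{2^m a + b} = D_{2^m a} + w_{2^m a} D_b`,
and `D_{2^m} = ∏_{j<m} (1 + r_j)`. On `I_{2s} \ I_{2s+1}` the factor `1 + r_{2s}` vanishes, so
`D_{2^{2s+2} a} = 0` and `|D_{q_n}| = |D_{2^{2s} + B}|`; there `D_{2^{2s}} = 2^{2s}` and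
`w_{2^{2s}} = r_{2s} = -1`, so `D_{2^{2s} + B} = 2^{2s} - D_B`, and `|D_B| ≤ B` gives the bound.
-/

lemma rad_of_eq_zero {k : ℕ} {x : G2} (h : x k = 0) : rad k x = 1 := by
  simp [rad, h]

lemma rad_of_ne_zero {k : ℕ} {x : G2} (h : x k ≠ 0) : rad k x = -1 := by
  have hv : (x k).val = 1 := by
    have h0 : (x k).val ≠ 0 := by simpa [ZMod.val_eq_zero] using h
    have h2 : (x k).val < 2 := ZMod.val_lt _
    omega
  simp [rad, hv]

lemma abs_rad (k : ℕ) (x : G2) : |rad k x| = 1 := by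
  simp [rad, abs_pow]

lemma abs_walsh (n : ℕ) (x : G2) : |walsh n x| = 1 := by
  rw [walsh, Finset.abs_prod]
  refine Finset.prod_eq_one fun k _ => ?_
  split <;> simp [abs_rad]

lemma walsh_eq_prod_range_of_le {n m : ℕ} (h : n ≤ m) (x : G2) :
    walsh n x = ∏ k ∈ Finset.range m, if n.testBit k then rad k x else 1 := by
  refine Finset.prod_subset (Finset.range_subset_range.mpr h) fun k _ hk => ?_
  have hnk : n < 2 ^ k := (Nat.not_lt.mp (Finset.mem_range.not.mp hk)).trans_lt k.lt_two_pow_self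
  simp [Nat.testBit_lt_two_pow hnk]

lemma walsh_two_pow_mul_add (m a : ℕ) {b : ℕ} (hb : b < 2 ^ m) (x : G2) :
    walsh (2 ^ m * a + b) x = walsh (2 ^ m * a) x * walsh b x := by
  rw [walsh_eq_prod_range_of_le le_rfl x, walsh_eq_prod_range_of_le (Nat.le_add_right _ b) x,
    walsh_eq_prod_range_of_le (Nat.le_add_left b _) x, ← Finset.prod_mul_distrib]
  refine Finset.prod_congr rfl fun k _ => ?_
  rw [Nat.testBit_two_pow_mul_add a hb k, Nat.testBit_two_pow_mul]
  by_cases hk : k < m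
  · simp [hk, Nat.not_le.mpr hk]
  · have hbk : b.testBit k = false :=
      Nat.testBit_lt_two_pow (hb.trans_le (Nat.pow_le_pow_right two_pos (Nat.le_of_not_lt hk)))
    simp [hk, Nat.le_of_not_lt hk, hbk]

lemma walsh_two_pow (m : ℕ) (x : G2) : walsh (2 ^ m) x = rad m x := by
  rw [walsh, Finset.prod_eq_single m]
  · simp [Nat.testBit_two_pow_self]
  · intro k _ hk
    simp [Nat.testBit_two_pow_of_ne (Ne.symm hk)]
  · exact fun hm => absurd (Finset.mem_range.mpr m.lt_two_pow_self) hm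

lemma abs_dirichlet_le (n : ℕ) (x : G2) : |dirichlet n x| ≤ n := by
  calc |dirichlet n x| ≤ ∑ k ∈ Finset.range n, |walsh k x| := Finset.abs_sum_le_sum_abs _ _
    _ = n := by simp [abs_walsh]

lemma dirichlet_two_pow_mul_add (m a : ℕ) {b : ℕ} (hb : b ≤ 2 ^ m) (x : G2) :
    dirichlet (2 ^ m * a + b) x =
      dirichlet (2 ^ m * a) x + walsh (2 ^ m * a) x * dirichlet b x := by
  rw [dirichlet, Finset.sum_range_add, dirichlet, dirichlet, Finset.mul_sum]
  congr 1
  exact Finset.sum_congr rfl fun k hk =>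
    walsh_two_pow_mul_add m a ((Finset.mem_range.mp hk).trans_le hb) x

lemma dirichlet_two_pow (m : ℕ) (x : G2) :
    dirichlet (2 ^ m) x = ∏ j ∈ Finset.range m, (1 + rad j x) := by
  induction m with
  | zero => simp [dirichlet, walsh]
  | succ m ih =>
    have h := dirichlet_two_pow_mul_add m 1 le_rfl x
    rw [mul_one, walsh_two_pow] at h
    rw [pow_succ, mul_two, h, ih, Finset.prod_range_succ]
    ring

lemma dirichlet_two_pow_of_mem_cyl {m : ℕ} {x : G2} (hx : x ∈ cyl m) :
    dirichlet (2 ^ m) x = 2 ^ m := by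
  rw [dirichlet_two_pow, Finset.prod_congr rfl (g := fun _ => (2 : ℝ)), Finset.prod_const,
    Finset.card_range]
  intro j hj
  rw [rad_of_eq_zero (hx j (Finset.mem_range.mp hj))]
  norm_num

lemma dirichlet_two_pow_eq_zero {m j : ℕ} {x : G2} (hj : j < m) (h : x j ≠ 0) :
    dirichlet (2 ^ m) x = 0 := by
  rw [dirichlet_two_pow]
  exact Finset.prod_eq_zero (Finset.mem_range.mpr hj) (by rw [rad_of_ne_zero h]; ring)

lemma dirichlet_two_pow_mul_eq_zero {m : ℕ} {x : G2} (h : dirichlet (2 ^ m) x = 0) (a : ℕ) :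
    dirichlet (2 ^ m * a) x = 0 := by
  induction a with
  | zero => simp [dirichlet]
  | succ a ih => rw [Nat.mul_succ, dirichlet_two_pow_mul_add m a le_rfl, ih, h, mul_zero, add_zero]

lemma abs_dirichlet_two_pow_mul_add {m : ℕ} {x : G2} (h : dirichlet (2 ^ m) x = 0) (a : ℕ)
    {b : ℕ} (hb : b ≤ 2 ^ m) :
    |dirichlet (2 ^ m * a + b) x| = |dirichlet b x| := by
  rw [dirichlet_two_pow_mul_add m a hb, dirichlet_two_pow_mul_eq_zero h, zero_add, abs_mul,
    abs_walsh, one_mul]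

lemma ne_zero_of_mem_cyl_diff {m : ℕ} {x : G2} (hx : x ∈ cyl m \ cyl (m + 1)) : x m ≠ 0 := by
  refine fun h => hx.2 fun i hi => ?_
  rcases Nat.lt_succ_iff_lt_or_eq.mp hi with hi | rfl
  exacts [hx.1 i hi, h]

lemma sub_le_abs_dirichlet_two_pow_add {m : ℕ} {x : G2} (hx : x ∈ cyl m \ cyl (m + 1))
    {b : ℕ} (hb : b ≤ 2 ^ m) :
    2 ^ m - (b : ℝ) ≤ |dirichlet (2 ^ m + b) x| := by
  have h := dirichlet_two_pow_mul_add m 1 hb x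
  rw [mul_one, walsh_two_pow, rad_of_ne_zero (ne_zero_of_mem_cyl_diff hx),
    dirichlet_two_pow_of_mem_cyl hx.1] at h
  calc 2 ^ m - (b : ℝ) ≤ 2 ^ m - dirichlet b x := by
        linarith [le_abs_self (dirichlet b x), abs_dirichlet_le b x]
    _ ≤ |dirichlet (2 ^ m + b) x| := by
        rw [h]; linarith [le_abs_self (2 ^ m + -1 * dirichlet b x)]

lemma two_mul_sum_range_four_pow_le (s : ℕ) : 2 * ∑ l ∈ Finset.range s, 4 ^ l ≤ 4 ^ s := by
  induction s with
  | zero => simp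
  | succ s ih => rw [Finset.sum_range_succ, pow_succ]; omega

lemma qq_eq_of_le {s n : ℕ} (hs : s ≤ n) :
    qq n = 2 ^ (2 * s + 2) * ∑ l ∈ Finset.range (n - s), 4 ^ l
      + (2 ^ (2 * s) + ∑ l ∈ Finset.range s, 4 ^ l) := by
  have hfour : ∀ k, (4 : ℕ) ^ k = 2 ^ (2 * k) := fun k => by rw [pow_mul]; norm_num
  rw [qq, show n + 1 = s + 1 + (n - s) by omega, Finset.sum_range_add, Finset.sum_range_succ,
    hfour s, Finset.mul_sum, add_comm, add_comm (∑ l ∈ Finset.range s, 4 ^ l)]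
  congr 1
  refine Finset.sum_congr rfl fun l _ => ?_
  rw [pow_add, hfour (s + 1), mul_add, mul_one]

theorem stmt3 (n s : ℕ) (hs : s ≤ n) (x : G2)
    (hx : x ∈ cyl (2 * s) \ cyl (2 * s + 1)) :
    (2 : ℝ) ^ (2 * s) / 2 ≤ |dirichlet (qq n) x| := by
  set B := ∑ l ∈ Finset.range s, 4 ^ l
  have hB : 2 * B ≤ 2 ^ (2 * s) := by simpa [pow_mul] using two_mul_sum_range_four_pow_le s
  have hvanish : dirichlet (2 ^ (2 * s + 2)) x = 0 :=
    dirichlet_two_pow_eq_zero (by omega) (ne_zero_of_mem_cyl_diff hx)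
  rw [qq_eq_of_le hs, abs_dirichlet_two_pow_mul_add hvanish _ (by rw [pow_add]; omega)]
  have hBreal : 2 * (B : ℝ) ≤ 2 ^ (2 * s) := by exact_mod_cast hB
  linarith [sub_le_abs_dirichlet_two_pow_add hx (b := B) (by omega)]

end
end

section
/- There is a constant c > 0 such that for the Walsh-Paley Dirichlet kernels, with q_n = ∑_{l=0}^{n} 4^l, one has ∫_G |D_{q_n}(x)| dμ(x) ≥ c·n for all n ≥ 1. In particular the Lebesgue constants ‖D_{q_n}‖_{L^1} are unbounded and grow at least logarithmically in q_n. -/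
open MeasureTheory ENNReal Filter
open scoped Classical

noncomputable section

/-!
For `m ≤ 2^k` one has `D_{2^k + m} = D_{2^k} + r_k D_m`, and `D_{2^k} = 2^k 𝟙_{I_k}`. Since
`q_{n+1} = 4^{n+1} + q_n`, on the shell `I_{2l} \ I_{2l+1}` the kernel `D_{q_n}` (`l ≤ n`) agrees
in absolute value with `D_{q_l} = 4^l + r_{2l} D_{q_{l-1}}`, which is at least
`4^l - q_{l-1} ≥ (2/3) 4^l` there. The shell has measure `2^{-(2l+1)}`, so each of the `n`
disjoint shells with `l < n` contributes at least `1/3` to `‖D_{q_n}‖₁`.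
-/

lemma ZMod.eq_one_of_ne_zero_two {a : ZMod 2} (h : a ≠ 0) : a = 1 := by
  revert a; decide

lemma ZMod.one_add_eq_zero_iff_ne_zero_two {a : ZMod 2} : 1 + a = 0 ↔ a ≠ 0 := by
  revert a; decide

lemma continuous_rad (k : ℕ) : Continuous (rad k) :=
  (continuous_of_discreteTopology (f := fun a : ZMod 2 => (-1 : ℝ) ^ a.val)).comp
    (continuous_apply k)

lemma walsh_eq_prod_range {n N : ℕ} (hn : n < 2 ^ N) (x : G2) :
    walsh n x = ∏ i ∈ Finset.range N, if n.testBit i then rad i x else 1 := by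
  have extend : ∀ M M', M ≤ M' → n < 2 ^ M →
      ∏ i ∈ Finset.range M, (if n.testBit i then rad i x else 1) =
        ∏ i ∈ Finset.range M', (if n.testBit i then rad i x else 1) := by
    intro M M' hMM' hnM
    refine Finset.prod_subset (Finset.range_subset_range.2 hMM') fun i _ hi => ?_
    have hni : n < 2 ^ i :=
      hnM.trans_le (Nat.pow_le_pow_right two_pos (not_lt.1 (Finset.mem_range.not.1 hi)))
    simp [Nat.testBit_lt_two_pow hni]
  rw [walsh, extend n (max n N) (le_max_left _ _) Nat.lt_two_pow_self,
    extend N (max n N) (le_max_right _ _) hn]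

lemma walsh_two_pow_add {k j : ℕ} (hj : j < 2 ^ k) (x : G2) :
    walsh (2 ^ k + j) x = rad k x * walsh j x := by
  have h2k : 2 ^ k + 2 ^ k = 2 ^ (k + 1) := by rw [pow_succ]; ring
  rw [walsh_eq_prod_range (N := k + 1) (by omega), walsh_eq_prod_range (N := k + 1) (by omega),
    Finset.prod_range_succ, Finset.prod_range_succ, Nat.testBit_two_pow_add_eq,
    Nat.testBit_lt_two_pow hj]
  have hlow : ∀ i ∈ Finset.range k, (if (2 ^ k + j).testBit i then rad i x else 1) =
      if j.testBit i then rad i x else 1 := fun i hi => by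
    rw [Nat.testBit_two_pow_add_gt (Finset.mem_range.1 hi)]
  simp [Finset.prod_congr rfl hlow, mul_comm]

lemma continuous_walsh (n : ℕ) : Continuous (walsh n) :=
  continuous_finsetProd _ fun i _ => by
    split
    · exact continuous_rad i
    · exact continuous_const

lemma continuous_dirichlet (n : ℕ) : Continuous (dirichlet n) :=
  continuous_finsetSum _ fun i _ => continuous_walsh i

lemma dirichlet_two_pow_add {k m : ℕ} (hm : m ≤ 2 ^ k) (x : G2) :
    dirichlet (2 ^ k + m) x = dirichlet (2 ^ k) x + rad k x * dirichlet m x := by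
  rw [dirichlet, dirichlet, dirichlet, Finset.sum_range_add, Finset.mul_sum]
  exact congrArg _ (Finset.sum_congr rfl fun i hi =>
    walsh_two_pow_add ((Finset.mem_range.1 hi).trans_le hm) x)

lemma cyl_zero : cyl 0 = Set.univ := by
  ext x; simp [cyl]

lemma mem_cyl_succ {n : ℕ} {x : G2} : x ∈ cyl (n + 1) ↔ x ∈ cyl n ∧ x n = 0 := by
  simp only [cyl, Set.mem_ofPred_eq, Nat.lt_succ_iff_lt_or_eq, or_imp, forall_and, forall_eq]

lemma cyl_antitone : Antitone cyl :=
  fun _ _ hmn _ hx i hi => hx i (hi.trans_le hmn)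

lemma dirichlet_two_pow_s4 (k : ℕ) (x : G2) :
    dirichlet (2 ^ k) x = if x ∈ cyl k then 2 ^ k else 0 := by
  induction k with
  | zero => simp [dirichlet, walsh, cyl_zero]
  | succ k ih =>
    rw [pow_succ, mul_two, dirichlet_two_pow_add le_rfl, ih, mem_cyl_succ]
    by_cases hk : x ∈ cyl k
    · by_cases h0 : x k = 0
      · simp [hk, h0, rad_of_eq_zero h0]; ring
      · simp [hk, h0, rad_of_ne_zero h0]
    · simp [hk]

lemma qq_succ (n : ℕ) : qq (n + 1) = 4 ^ (n + 1) + qq n := by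
  rw [qq, Finset.sum_range_succ, add_comm, qq]

lemma three_mul_qq_add_one (n : ℕ) : 3 * qq n + 1 = 4 ^ (n + 1) := by
  induction n with
  | zero => rfl
  | succ n ih => rw [qq_succ, pow_succ 4 (n + 1)]; omega

lemma dirichlet_qq_succ (n : ℕ) (x : G2) :
    dirichlet (qq (n + 1)) x
      = dirichlet (2 ^ (2 * (n + 1))) x + rad (2 * (n + 1)) x * dirichlet (qq n) x := by
  have h4 : (4 : ℕ) ^ (n + 1) = 2 ^ (2 * (n + 1)) := by rw [pow_mul]; norm_num
  rw [qq_succ, h4]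
  exact dirichlet_two_pow_add (by have := three_mul_qq_add_one n; omega) x

lemma abs_dirichlet_qq_of_not_mem_cyl {l n : ℕ} (hln : l ≤ n) {x : G2}
    (hx : x ∉ cyl (2 * l + 1)) : |dirichlet (qq n) x| = |dirichlet (qq l) x| := by
  induction n, hln using Nat.le_induction with
  | base => rfl
  | succ n hln ih =>
    have hxn : x ∉ cyl (2 * (n + 1)) := fun h => hx (cyl_antitone (by omega) h)
    rw [dirichlet_qq_succ, dirichlet_two_pow_s4, if_neg hxn, zero_add, abs_mul, abs_rad, one_mul, ih]

lemma two_thirds_mul_four_pow_le_abs_dirichlet_qq {l : ℕ} {x : G2} (hx : x ∈ cyl (2 * l)) :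
    2 / 3 * (4 : ℝ) ^ l ≤ |dirichlet (qq l) x| := by
  cases l with
  | zero => norm_num [qq, dirichlet, walsh]
  | succ m =>
    rw [dirichlet_qq_succ, dirichlet_two_pow_s4, if_pos hx]
    set r := rad (2 * (m + 1)) x * dirichlet (qq m) x
    have hr : |r| ≤ qq m := by
      rw [abs_mul, abs_rad, one_mul]; exact abs_dirichlet_le _ x
    have hq : 3 * (qq m : ℝ) + 1 = 4 ^ (m + 1) := by exact_mod_cast three_mul_qq_add_one m
    have h4 : (2 : ℝ) ^ (2 * (m + 1)) = 4 ^ (m + 1) := by rw [pow_mul]; norm_num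
    rw [h4]
    linarith [neg_abs_le r, le_abs_self ((4 : ℝ) ^ (m + 1) + r)]

instance : Measure.IsAddLeftInvariant muG := by unfold muG; infer_instance

instance : IsProbabilityMeasure muG := ⟨Measure.addHaarMeasure_self⟩

lemma measurableSet_cyl (n : ℕ) : MeasurableSet (cyl n) := by
  have h : cyl n = ⋂ i ∈ Set.Iio n, (fun x : G2 => x i) ⁻¹' {0} := by
    ext x; simp [cyl]
  rw [h]
  exact MeasurableSet.biInter (Set.to_countable _) fun i _ =>
    measurable_pi_apply i MeasurableSpace.measurableSet_top

lemma add_single_preimage_cyl_succ (n : ℕ) :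
    ((Pi.single n (1 : ZMod 2) : G2) + ·) ⁻¹' cyl (n + 1) = cyl n \ cyl (n + 1) := by
  ext x
  have hlow : (Pi.single n (1 : ZMod 2) : G2) + x ∈ cyl n ↔ x ∈ cyl n :=
    forall₂_congr fun i hi => by simp [hi.ne]
  rw [Set.mem_preimage, mem_cyl_succ, hlow, Set.mem_sdiff, mem_cyl_succ, Pi.add_apply,
    Pi.single_eq_same, ZMod.one_add_eq_zero_iff_ne_zero_two]
  tauto

lemma integrable_abs_dirichlet {μ : Measure G2} [IsFiniteMeasure μ] (n : ℕ) :
    Integrable (fun x => |dirichlet n x|) μ :=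
  (continuous_dirichlet n).abs.integrable_of_hasCompactSupport (.of_compactSpace _)

section Measure

variable {μ : Measure G2} [μ.IsAddLeftInvariant]

lemma measure_cyl_sdiff_eq_measure_cyl_succ (n : ℕ) :
    μ (cyl n \ cyl (n + 1)) = μ (cyl (n + 1)) := by
  rw [← add_single_preimage_cyl_succ, measure_preimage_add]

variable [IsProbabilityMeasure μ]

lemma measure_cyl (n : ℕ) : μ (cyl n) = 2⁻¹ ^ n := by
  induction n with
  | zero => rw [cyl_zero, measure_univ, pow_zero]
  | succ n ih =>
    have hhalves :=
      measure_add_sdiff (μ := μ) (measurableSet_cyl (n + 1)).nullMeasurableSet (cyl n)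
    rw [measure_cyl_sdiff_eq_measure_cyl_succ, Set.union_eq_right.2 (cyl_antitone n.le_succ),
      ih] at hhalves
    rw [pow_succ, ← hhalves, ← two_mul, mul_comm, ← mul_assoc,
      ENNReal.inv_mul_cancel two_ne_zero ENNReal.ofNat_ne_top, one_mul]

lemma measure_cyl_sdiff (n : ℕ) : μ (cyl n \ cyl (n + 1)) = 2⁻¹ ^ (n + 1) := by
  rw [measure_cyl_sdiff_eq_measure_cyl_succ, measure_cyl]

lemma one_third_le_setIntegral_abs_dirichlet_qq {l n : ℕ} (hln : l ≤ n) :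
    1 / 3 ≤ ∫ x in cyl (2 * l) \ cyl (2 * l + 1), |dirichlet (qq n) x| ∂μ := by
  have hbound : ∀ x ∈ cyl (2 * l) \ cyl (2 * l + 1),
      2 / 3 * (4 : ℝ) ^ l ≤ |dirichlet (qq n) x| :=
    fun x hx => (abs_dirichlet_qq_of_not_mem_cyl hln hx.2).symm ▸
      two_thirds_mul_four_pow_le_abs_dirichlet_qq hx.1
  have hint := setIntegral_ge_of_const_le_real
    ((measurableSet_cyl _).diff (measurableSet_cyl _)) (measure_ne_top μ _) hbound
    (integrable_abs_dirichlet _).integrableOn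
  have hmeas : μ.real (cyl (2 * l) \ cyl (2 * l + 1)) = (4 ^ l)⁻¹ * 2⁻¹ := by
    rw [measureReal_def, measure_cyl_sdiff, ENNReal.toReal_pow, ENNReal.toReal_inv, pow_succ,
      pow_mul, ← inv_pow]
    norm_num
  rw [hmeas] at hint
  refine le_of_eq_of_le ?_ hint
  field_simp

end Measure

lemma sum_setIntegral_le_integral {X ι : Type*} [MeasurableSpace X] {μ : Measure X}
    {f : X → ℝ} (hf : Integrable f μ) (hf0 : 0 ≤ f) (t : Finset ι) {s : ι → Set X}
    (hs : ∀ i ∈ t, MeasurableSet (s i)) (hd : (t : Set ι).PairwiseDisjoint s) :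
    ∑ i ∈ t, ∫ x in s i, f x ∂μ ≤ ∫ x, f x ∂μ := by
  rw [← integral_biUnion_finset t hs hd fun i _ => hf.integrableOn]
  exact setIntegral_le_integral hf (.of_forall hf0)

open Function in
lemma pairwise_disjoint_cyl_sdiff : Pairwise (Disjoint on (fun n => cyl n \ cyl (n + 1))) :=
  (pairwise_disjoint_on _).2 fun _ _ hmn =>
    Set.disjoint_sdiff_left.mono_right (Set.sdiff_subset.trans (cyl_antitone hmn))

theorem stmt4 :
    ∃ c : ℝ, 0 < c ∧ ∀ n : ℕ, 1 ≤ n → c * n ≤ ∫ x, |dirichlet (qq n) x| ∂muG := by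
  refine ⟨1 / 3, by norm_num, fun n _ => ?_⟩
  have hshells : (Finset.range n : Set ℕ).PairwiseDisjoint
      fun l => cyl (2 * l) \ cyl (2 * l + 1) :=
    (pairwise_disjoint_cyl_sdiff.comp_of_injective
      (mul_right_injective₀ two_ne_zero)).set_pairwise _
  calc (1 / 3 : ℝ) * n = ∑ _l ∈ Finset.range n, (1 / 3 : ℝ) := by simp [mul_comm]
    _ ≤ ∑ l ∈ Finset.range n,
          ∫ x in cyl (2 * l) \ cyl (2 * l + 1), |dirichlet (qq n) x| ∂muG :=
      Finset.sum_le_sum fun l hl =>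
        one_third_le_setIntegral_abs_dirichlet_qq (Finset.mem_range.1 hl).le
    _ ≤ ∫ x, |dirichlet (qq n) x| ∂muG :=
      sum_setIntegral_le_integral (integrable_abs_dirichlet _) (fun _ => abs_nonneg _) _
        (fun _ _ => (measurableSet_cyl _).diff (measurableSet_cyl _)) hshells

end
end
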